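/- Let u ∈ D[ω] with least δ-exponent k ≥ 2, i.e., u = δ^{−k}(aω³ + bω² + cω + d) with a, b, c, d ∈ ℤ, k minimal, where δ = 1 + ω. Suppose |u| ≤ 1 and |u•| ≤ 1. Let ξ = 1 − u†u ∈ D[√2] and write ξ•ξ = n/2^ℓ with n ∈ ℤ and ℓ ≥ 0 minimal. Then n ≡ 1 (mod 8). -/

import Mathlib

noncomputable def ω : ℂ := (1 + Complex.I) / (Real.sqrt 2 : ℂ)

/-- δ = 1 + ω. -/
noncomputable def δ : ℂ := 1 + ω

noncomputable def zω (a b c d : ℤ) : ℂ := a * ω ^ 3 + b * ω ^ 2 + c * ω + d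

/-- The √2-conjugate (−)• of aω³ + bω² + cω + d; note δ• = 1 − ω. -/
noncomputable def zωBul (a b c d : ℤ) : ℂ := (-a) * ω ^ 3 + b * ω ^ 2 + (-c) * ω + d

/-! Write `u = z / δ ^ k`. Then `‖z‖² = p + q√2` with `p, q ∈ ℤ` and `‖δ‖² = 2 + √2`, while `u•`
gives the `√2`-conjugates of these, so with `x = p + q√2` and `ε = 2 + √2` in `ℤ[√2]`,
`ξ•ξ = N(ε ^ k - x) / 2 ^ k` for the norm `N` of `ℤ[√2]`. Minimality of `k` makes `a + b + c + d`
odd, hence `p` odd and `q` even, and `ε ^ k ∈ 2ℤ[√2]` once `k ≥ 2`. So `ε ^ k - x = r + s√2` with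
`r` odd and `s` even, and `N = r² - 2s² ≡ 1 (mod 8)`. Being odd, this numerator is already the
reduced one, so `n = N`. -/

open Zsqrtd ComplexConjugate

namespace Zsqrtd

section

variable {d : ℤ} {K : Type*} [Field K] (φ : ℤ√d →+* K)

theorem map_mul_map_star (x : ℤ√d) : φ x * φ (star x) = x.norm := by
  rw [← map_mul, ← norm_eq_mul_conj, map_intCast]

theorem one_sub_div_mul_one_sub_div [CharZero K] {e : ℤ√d} (he : e.norm ≠ 0)
    (x : ℤ√d) (k : ℕ) :
    (1 - φ x / φ e ^ k) * (1 - φ (star x) / φ (star e) ^ k) =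
      ((e ^ k - x).norm : K) / (e.norm : K) ^ k := by
  have hne : φ e * φ (star e) ≠ 0 := by rw [map_mul_map_star]; exact_mod_cast he
  have h₁ : φ e ≠ 0 := left_ne_zero_of_mul hne
  have h₂ : φ (star e) ≠ 0 := right_ne_zero_of_mul hne
  rw [← map_mul_map_star φ, ← map_mul_map_star φ, star_sub, star_pow]
  simp only [map_sub, map_pow]
  field_simp
  ring

end

theorem norm_emod_eight_of_odd_of_even {y : ℤ√2} (hre : Odd y.re) (him : Even y.im) :
    y.norm % 8 = 1 := by
  obtain ⟨r, hr⟩ := hre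
  obtain ⟨s, hs⟩ := him
  obtain ⟨t, ht⟩ := Int.even_mul_succ_self r
  have : y.norm = 8 * (t - s ^ 2) + 1 := by
    rw [norm_def, hr, hs]; linear_combination 4 * ht
  omega

theorem norm_sub_emod_eight {w x : ℤ√2} (hw : 2 ∣ w) (hre : Odd x.re) (him : Even x.im) :
    (w - x).norm % 8 = 1 := by
  obtain ⟨v, rfl⟩ := hw
  apply norm_emod_eight_of_odd_of_even
  · simpa using (even_two_mul v.re).sub_odd hre
  · simpa using (even_two_mul v.im).sub him

theorem two_dvd_two_add_sqrtd_pow {k : ℕ} (hk : 2 ≤ k) : (2 : ℤ√2) ∣ ⟨2, 1⟩ ^ k := by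
  obtain ⟨j, rfl⟩ := Nat.exists_eq_add_of_le hk
  exact ⟨⟨3, 2⟩ * ⟨2, 1⟩ ^ j, by rw [pow_add]; ext <;> simp [pow_two] <;> ring⟩

end Zsqrtd

theorem eq_of_odd_of_minimal_two_pow_denom {x : ℝ} {N n : ℤ} {k ℓ : ℕ} (hN : Odd N)
    (hxN : x = N / 2 ^ k) (hxn : x = n / 2 ^ ℓ)
    (hmin : ∀ ℓ' : ℕ, ℓ' < ℓ → ¬ ∃ n' : ℤ, x = (n' : ℝ) / 2 ^ ℓ') : n = N := by
  have hℓk : ℓ ≤ k := not_lt.mp fun h => hmin k h ⟨N, hxN⟩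
  obtain ⟨j, rfl⟩ := Nat.exists_eq_add_of_le hℓk
  have hNn : N = 2 ^ j * n := by
    rw [hxN, pow_add] at hxn
    field_simp at hxn
    exact_mod_cast hxn
  cases j with
  | zero => simpa using hNn.symm
  | succ j =>
    rw [hNn, pow_succ', mul_assoc] at hN
    exact absurd hN (Int.not_odd_iff_even.mpr (even_two_mul _))

theorem sq_norm_div_pow {𝕜 : Type*} [NormedDivisionRing 𝕜] (z w : 𝕜) (k : ℕ) :
    ‖z / w ^ k‖ ^ 2 = ‖z‖ ^ 2 / (‖w‖ ^ 2) ^ k := by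
  rw [norm_div, norm_pow, div_pow, ← pow_mul, ← pow_mul, mul_comm]

noncomputable def sqrtTwoEmbedding : ℤ√2 →+* ℝ :=
  Zsqrtd.lift ⟨√2, by simp⟩

theorem sqrtTwoEmbedding_apply (x : ℤ√2) : sqrtTwoEmbedding x = x.re + x.im * √2 := rfl

theorem ofReal_sqrt_two_ne_zero : ((√2 : ℝ) : ℂ) ≠ 0 := by simp

theorem ω_mul_sqrt_two : ω * (√2 : ℝ) = 1 + Complex.I := by
  rw [ω, div_mul_cancel₀ _ ofReal_sqrt_two_ne_zero]

theorem ω_sq : ω ^ 2 = Complex.I := by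
  have hs : ((√2 : ℝ) : ℂ) ^ 2 = 2 := by exact_mod_cast Real.sq_sqrt zero_le_two
  refine mul_right_cancel₀ (two_ne_zero (α := ℂ)) ?_
  linear_combination (ω * (√2 : ℝ) + 1 + Complex.I) * ω_mul_sqrt_two - ω ^ 2 * hs + Complex.I_sq

theorem ω_pow_four : ω ^ 4 = -1 := by
  rw [show 4 = 2 * 2 from rfl, pow_mul, ω_sq, Complex.I_sq]

theorem ofReal_sqrt_two_eq_ω_sub_ω_cube : ((√2 : ℝ) : ℂ) = ω - ω ^ 3 := by
  refine mul_right_cancel₀ ofReal_sqrt_two_ne_zero ?_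
  rw [← Complex.ofReal_mul, Real.mul_self_sqrt zero_le_two, Complex.ofReal_ofNat]
  linear_combination (ω ^ 2 - 1) * ω_mul_sqrt_two + (1 + Complex.I) * ω_sq + Complex.I_sq

theorem conj_ω : conj ω = -ω ^ 3 := by
  refine mul_right_cancel₀ ofReal_sqrt_two_ne_zero ?_
  rw [← Complex.conj_ofReal, ← map_mul, ω_mul_sqrt_two, map_add, map_one, Complex.conj_I,
    Complex.conj_ofReal]
  linear_combination ω ^ 2 * ω_mul_sqrt_two + (1 + Complex.I) * ω_sq + Complex.I_sq

def zωNormSq (a b c d : ℤ) : ℤ√2 := ⟨a ^ 2 + b ^ 2 + c ^ 2 + d ^ 2, a * b + b * c + c * d - a * d⟩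

theorem conj_zω (a b c d : ℤ) : conj (zω a b c d) = -a * ω - b * ω ^ 2 - c * ω ^ 3 + d := by
  simp only [zω, map_add, map_mul, map_pow, map_intCast, conj_ω]
  linear_combination (-(a : ℂ) * ω * (ω ^ 4 - 1) + b * ω ^ 2) * ω_pow_four

theorem sq_norm_zω (a b c d : ℤ) : ‖zω a b c d‖ ^ 2 = sqrtTwoEmbedding (zωNormSq a b c d) := by
  apply Complex.ofReal_injective
  rw [Complex.sq_norm, ← Complex.mul_conj, conj_zω, sqrtTwoEmbedding_apply]
  push_cast [zωNormSq, ofReal_sqrt_two_eq_ω_sub_ω_cube]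
  simp only [zω]
  linear_combination
    (-((a : ℂ) ^ 2 + b ^ 2 + c ^ 2) - (a * b + b * c) * ω - a * c * ω ^ 2) * ω_pow_four

theorem sq_norm_δ : ‖δ‖ ^ 2 = sqrtTwoEmbedding ⟨2, 1⟩ := by
  have hδ : δ = zω 0 0 1 1 := by simp [δ, zω, add_comm]
  rw [hδ, sq_norm_zω]
  rfl

theorem sq_norm_one_sub_ω : ‖1 - ω‖ ^ 2 = sqrtTwoEmbedding (star ⟨2, 1⟩) := by
  have h : 1 - ω = zω 0 0 (-1) 1 := by simp [zω]; ring
  rw [h, sq_norm_zω]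
  rfl

theorem sq_norm_zωBul (a b c d : ℤ) :
    ‖zωBul a b c d‖ ^ 2 = sqrtTwoEmbedding (star (zωNormSq a b c d)) := by
  have h : zωBul a b c d = zω (-a) b (-c) d := by simp [zωBul, zω]
  have h' : zωNormSq (-a) b (-c) d = star (zωNormSq a b c d) := by
    ext
    · simp only [zωNormSq, re_star, even_two, Even.neg_pow]
    · simp only [zωNormSq, im_star]; ring
  rw [h, sq_norm_zω, h']

theorem δ_ne_zero : δ ≠ 0 := by
  intro h
  have := sq_norm_δ
  rw [h, sqrtTwoEmbedding_apply] at this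
  norm_num at this
  linarith [Real.sqrt_nonneg 2]

theorem exists_zω_eq_mul_δ_of_even {a b c d : ℤ} (h : Even (a + b + c + d)) :
    ∃ a' b' c' d' : ℤ, zω a b c d = zω a' b' c' d' * δ := by
  obtain ⟨s, hs⟩ := h
  obtain ⟨t, rfl⟩ : ∃ t, a = 2 * t + b - c + d := ⟨s - b - d, by omega⟩
  refine ⟨t, b - c + d + t, c - d - t, d + t, ?_⟩
  simp only [zω, δ]
  push_cast
  linear_combination -(t : ℂ) * ω_pow_four

theorem odd_sum_of_minimal {u : ℂ} {a b c d : ℤ} {k : ℕ} (hk : k ≠ 0)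
    (hrep : u = zω a b c d / δ ^ k)
    (hmin : ∀ k' : ℕ, k' < k → ¬ ∃ a' b' c' d' : ℤ, u = zω a' b' c' d' / δ ^ k') :
    Odd (a + b + c + d) := by
  by_contra hodd
  obtain ⟨a', b', c', d', h⟩ := exists_zω_eq_mul_δ_of_even (Int.not_odd_iff_even.mp hodd)
  refine hmin (k - 1) (by omega) ⟨a', b', c', d', ?_⟩
  rw [hrep, h, ← pow_sub_one_mul hk, mul_div_mul_right _ _ δ_ne_zero]

theorem odd_zωNormSq_re {a b c d : ℤ} (h : Odd (a + b + c + d)) :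
    Odd (zωNormSq a b c d).re := by
  have hre : (zωNormSq a b c d).re =
      (a + b + c + d) ^ 2 - 2 * (a * b + a * c + a * d + b * c + b * d + c * d) := by
    simp only [zωNormSq]; ring
  rw [hre]
  exact h.pow.sub_even (even_two_mul _)

theorem even_zωNormSq_im {a b c d : ℤ} (h : Odd (a + b + c + d)) :
    Even (zωNormSq a b c d).im := by
  have him : (zωNormSq a b c d).im = (a + c) * (b + d) - 2 * (a * d) := by
    simp only [zωNormSq]; ring
  rw [show a + b + c + d = (a + c) + (b + d) by ring, Int.odd_add] at h
  rw [him]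
  refine Even.sub (Int.even_mul.mpr ?_) (even_two_mul _)
  rcases Int.even_or_odd (a + c) with hac | hac
  exacts [Or.inl hac, Or.inr (h.mp hac)]

theorem n_equiv_one_mod_eight_general (u : ℂ) (a b c d : ℤ) (k : ℕ) (hk : 2 ≤ k)
    (hrep : u = zω a b c d / δ ^ k)
    (hmin : ∀ k' : ℕ, k' < k → ¬ ∃ a' b' c' d' : ℤ, u = zω a' b' c' d' / δ ^ k')
    (n : ℤ) (ℓ : ℕ)
    (hn : (1 - ‖u‖ ^ 2) * (1 - ‖zωBul a b c d / (1 - ω) ^ k‖ ^ 2) = (n : ℝ) / 2 ^ ℓ)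
    (hℓmin : ∀ ℓ' : ℕ, ℓ' < ℓ → ¬ ∃ n' : ℤ,
      (1 - ‖u‖ ^ 2) * (1 - ‖zωBul a b c d / (1 - ω) ^ k‖ ^ 2) = (n' : ℝ) / 2 ^ ℓ') :
    n % 8 = 1 := by
  have hsum : Odd (a + b + c + d) := odd_sum_of_minimal (by omega) hrep hmin
  set y : ℤ√2 := ⟨2, 1⟩ ^ k - zωNormSq a b c d
  have hξ : (1 - ‖u‖ ^ 2) * (1 - ‖zωBul a b c d / (1 - ω) ^ k‖ ^ 2) = (y.norm : ℝ) / 2 ^ k := by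
    rw [hrep, sq_norm_div_pow, sq_norm_div_pow, sq_norm_zω, sq_norm_δ, sq_norm_zωBul,
      sq_norm_one_sub_ω, one_sub_div_mul_one_sub_div _ (by decide),
      show (⟨2, 1⟩ : ℤ√2).norm = 2 from rfl, Int.cast_ofNat]
  have hy : y.norm % 8 = 1 := norm_sub_emod_eight (two_dvd_two_add_sqrtd_pow hk)
    (odd_zωNormSq_re hsum) (even_zωNormSq_im hsum)
  rwa [eq_of_odd_of_minimal_two_pow_denom (Int.odd_iff.mpr (by omega)) hξ hn hℓmin]

/-- If u ∈ D[ω] has least δ-exponent k ≥ 2, and both u and u• lie in the closed unit disk,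
    and ξ•ξ = n/2^ℓ where ξ = 1 − u†u, with n ∈ ℤ and ℓ minimal, then n ≡ 1 (mod 8). -/
theorem n_equiv_one_mod_eight (u : ℂ) (a b c d : ℤ) (k : ℕ) (hk : 2 ≤ k)
    (hrep : u = zω a b c d / δ ^ k)
    (hmin : ∀ k' : ℕ, k' < k → ¬ ∃ a' b' c' d' : ℤ, u = zω a' b' c' d' / δ ^ k')
    (hu : ‖u‖ ≤ 1) (hubul : ‖zωBul a b c d / (1 - ω) ^ k‖ ≤ 1)
    (n : ℤ) (ℓ : ℕ)
    (hn : (1 - ‖u‖ ^ 2) * (1 - ‖zωBul a b c d / (1 - ω) ^ k‖ ^ 2) = (n : ℝ) / 2 ^ ℓ)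
    (hℓmin : ∀ ℓ' : ℕ, ℓ' < ℓ → ¬ ∃ n' : ℤ,
      (1 - ‖u‖ ^ 2) * (1 - ‖zωBul a b c d / (1 - ω) ^ k‖ ^ 2) = (n' : ℝ) / 2 ^ ℓ') :
    n % 8 = 1 :=
  n_equiv_one_mod_eight_general u a b c d k hk hrep hmin n ℓ hn hℓmin
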